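/- Convexity inequality for the weak limits of the pressure: if ρ_ε ≥ 0 converge weakly in L¹ to ρ, ρ_ε^γ + δρ_ε^β converge weakly to P̄, and ρ_ε^{γ+1} + δρ_ε^{β+1} converge weakly to Q̄ (γ, β > 1, δ ≥ 0), then P̄·ρ − Q̄ ≤ 0 almost everywhere. -/

import Mathlib

open MeasureTheory Filter Topology Set

/-!
Minty's trick. Since `P(z) = z^γ + δ z^β` is monotone on `[0, ∞)`, for every bounded measurable
`b ≥ 0` we have `(P(ρₙ) - P(b)) (ρₙ - b) ≥ 0`. Expanded, this is a linear combination of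
`P(ρₙ) ρₙ`, `P(ρₙ)`, `ρₙ` and `1` with bounded coefficients, so it passes to the weak limit:
`Q̄ - P̄ b - ρ P(b) + P(b) b ≥ 0` a.e. At a point `x`, the truncation `b = min ρ k` with
`k ≥ ρ(x)` equals `ρ(x)`, which leaves `Q̄ - P̄ ρ ≥ 0`.
-/

section

variable {α : Type*} [MeasurableSpace α] {μ : Measure α}

lemma MonotoneOn.mul_sub_nonneg {s : Set ℝ} {f : ℝ → ℝ} (hf : MonotoneOn f s) {a b : ℝ}
    (ha : a ∈ s) (hb : b ∈ s) : 0 ≤ (f a - f b) * (a - b) := by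
  rcases le_total a b with hab | hab
  · exact mul_nonneg_of_nonpos_of_nonpos (sub_nonpos.2 (hf ha hb hab)) (sub_nonpos.2 hab)
  · exact mul_nonneg (sub_nonneg.2 (hf hb ha hab)) (sub_nonneg.2 hab)

lemma exists_forall_abs_mul_le {ι : Type*} {f g : ι → ℝ} (hf : ∃ C, ∀ x, |f x| ≤ C)
    (hg : ∃ C, ∀ x, |g x| ≤ C) : ∃ C, ∀ x, |f x * g x| ≤ C := by
  obtain ⟨C, hC⟩ := hf
  obtain ⟨D, hD⟩ := hg
  exact ⟨C * D, fun x => abs_mul (f x) (g x) ▸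
    mul_le_mul (hC x) (hD x) (abs_nonneg _) ((abs_nonneg _).trans (hC x))⟩

lemma MeasureTheory.Integrable.mul_of_bounded {f φ : α → ℝ} (hf : Integrable f μ)
    (hφ : Measurable φ) (hC : ∃ C, ∀ x, |φ x| ≤ C) : Integrable (fun x => f x * φ x) μ :=
  let ⟨_, hC⟩ := hC
  hf.mul_bdd hφ.aestronglyMeasurable (ae_of_all _ hC)

lemma ae_nonneg_of_forall_integral_mul_nonneg {g : α → ℝ} (hg : Integrable g μ)
    (h : ∀ φ : α → ℝ, Measurable φ → (∃ C, ∀ x, |φ x| ≤ C) → (∀ x, 0 ≤ φ x) →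
      0 ≤ ∫ x, g x * φ x ∂μ) : 0 ≤ᵐ[μ] g := by
  refine ae_nonneg_of_forall_setIntegral_nonneg hg fun s hs _ => ?_
  have hind : ∀ x, 0 ≤ s.indicator (1 : α → ℝ) x ∧ s.indicator (1 : α → ℝ) x ≤ 1 :=
    fun x => ⟨indicator_nonneg (fun _ _ => zero_le_one) x,
      indicator_le_self' (fun _ _ => zero_le_one) x⟩
  have h1 := h (s.indicator 1) (measurable_one.indicator hs)
    ⟨1, fun x => abs_le.2 ⟨by linarith [(hind x).1], (hind x).2⟩⟩ fun x => (hind x).1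
  simp only [← indicator_mul_right, Pi.one_apply, mul_one] at h1
  rwa [integral_indicator hs] at h1

/-- Weak convergence in `L¹(μ)`, tested against bounded measurable functions. -/
structure TendstoWeakly (μ : Measure α) (f : ℕ → α → ℝ) (F : α → ℝ) : Prop where
  integrable : ∀ n, Integrable (f n) μ
  integrable_limit : Integrable F μ
  tendsto : ∀ φ : α → ℝ, Measurable φ → (∃ C, ∀ x, |φ x| ≤ C) →
    Tendsto (fun n => ∫ x, f n x * φ x ∂μ) atTop (𝓝 (∫ x, F x * φ x ∂μ))

lemma tendstoWeakly_const {F : α → ℝ} (hF : Integrable F μ) :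
    TendstoWeakly μ (fun _ => F) F :=
  ⟨fun _ => hF, hF, fun _ _ _ => tendsto_const_nhds⟩

namespace TendstoWeakly

variable {f g : ℕ → α → ℝ} {F G : α → ℝ}

lemma add (hf : TendstoWeakly μ f F) (hg : TendstoWeakly μ g G) :
    TendstoWeakly μ (fun n x => f n x + g n x) (fun x => F x + G x) where
  integrable n := (hf.integrable n).add (hg.integrable n)
  integrable_limit := hf.integrable_limit.add hg.integrable_limit
  tendsto φ hφ hC := by
    simp only [add_mul]
    rw [integral_add (hf.integrable_limit.mul_of_bounded hφ hC)
      (hg.integrable_limit.mul_of_bounded hφ hC)]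
    refine ((hf.tendsto φ hφ hC).add (hg.tendsto φ hφ hC)).congr fun n => ?_
    exact (integral_add ((hf.integrable n).mul_of_bounded hφ hC)
      ((hg.integrable n).mul_of_bounded hφ hC)).symm

lemma sub (hf : TendstoWeakly μ f F) (hg : TendstoWeakly μ g G) :
    TendstoWeakly μ (fun n x => f n x - g n x) (fun x => F x - G x) where
  integrable n := (hf.integrable n).sub (hg.integrable n)
  integrable_limit := hf.integrable_limit.sub hg.integrable_limit
  tendsto φ hφ hC := by
    simp only [sub_mul]
    rw [integral_sub (hf.integrable_limit.mul_of_bounded hφ hC)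
      (hg.integrable_limit.mul_of_bounded hφ hC)]
    refine ((hf.tendsto φ hφ hC).sub (hg.tendsto φ hφ hC)).congr fun n => ?_
    exact (integral_sub ((hf.integrable n).mul_of_bounded hφ hC)
      ((hg.integrable n).mul_of_bounded hφ hC)).symm

lemma mul_bounded (hf : TendstoWeakly μ f F) {b : α → ℝ} (hb : Measurable b)
    (hC : ∃ C, ∀ x, |b x| ≤ C) :
    TendstoWeakly μ (fun n x => f n x * b x) (fun x => F x * b x) where
  integrable n := (hf.integrable n).mul_of_bounded hb hC
  integrable_limit := hf.integrable_limit.mul_of_bounded hb hC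
  tendsto φ hφ hφC := by
    simpa only [mul_assoc] using
      hf.tendsto (fun x => b x * φ x) (hb.mul hφ) (exists_forall_abs_mul_le hC hφC)

lemma ae_nonneg (hf : TendstoWeakly μ f F) (h0 : ∀ n, 0 ≤ᵐ[μ] f n) : 0 ≤ᵐ[μ] F :=
  ae_nonneg_of_forall_integral_mul_nonneg hf.integrable_limit fun φ hφ hC hφ0 =>
    ge_of_tendsto' (hf.tendsto φ hφ hC) fun n =>
      integral_nonneg_of_ae <| (h0 n).mono fun x hx => mul_nonneg hx (hφ0 x)

variable [IsFiniteMeasure μ] {P : ℝ → ℝ} {ρn : ℕ → α → ℝ} {ρ P' Q' : α → ℝ}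

lemma ae_minty_nonneg (hP : MonotoneOn P (Ici 0)) (hPm : Measurable P)
    (hpos : ∀ n, 0 ≤ᵐ[μ] ρn n) (hρ : TendstoWeakly μ ρn ρ)
    (hP' : TendstoWeakly μ (fun n x => P (ρn n x)) P')
    (hQ' : TendstoWeakly μ (fun n x => P (ρn n x) * ρn n x) Q')
    {b : α → ℝ} (hb : Measurable b) {K : ℝ} (hbK : ∀ x, b x ∈ Icc 0 K) :
    ∀ᵐ x ∂μ, 0 ≤ Q' x - P' x * b x - ρ x * P (b x) + P (b x) * b x := by
  have hbC : ∃ C, ∀ x, |b x| ≤ C :=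
    ⟨K, fun x => abs_le.2 ⟨by linarith [(hbK x).1, (hbK x).2], (hbK x).2⟩⟩
  have hPbC : ∃ C, ∀ x, |P (b x)| ≤ C := ⟨max |P 0| |P K|, fun x =>
    abs_le_max_abs_abs (hP self_mem_Ici (hbK x).1 (hbK x).1)
      (hP (hbK x).1 ((hbK x).1.trans (hbK x).2) (hbK x).2)⟩
  have hPbm : Measurable fun x => P (b x) := hPm.comp hb
  obtain ⟨C, hC⟩ := exists_forall_abs_mul_le hPbC hbC
  have hPbb : Integrable (fun x => P (b x) * b x) μ :=
    .of_bound (hPbm.mul hb).aestronglyMeasurable C (ae_of_all _ hC)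
  have hlim := ((hQ'.sub (hP'.mul_bounded hb hbC)).sub (hρ.mul_bounded hPbm hPbC)).add
    (tendstoWeakly_const hPbb)
  refine hlim.ae_nonneg fun n => (hpos n).mono fun x hx => ?_
  calc (0 : ℝ) ≤ (P (ρn n x) - P (b x)) * (ρn n x - b x) := hP.mul_sub_nonneg hx (hbK x).1
    _ = _ := by ring

theorem ae_mul_le (hP : MonotoneOn P (Ici 0)) (hPm : Measurable P)
    (hpos : ∀ n, 0 ≤ᵐ[μ] ρn n) (hρ : TendstoWeakly μ ρn ρ)
    (hP' : TendstoWeakly μ (fun n x => P (ρn n x)) P')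
    (hQ' : TendstoWeakly μ (fun n x => P (ρn n x) * ρn n x) Q') :
    ∀ᵐ x ∂μ, P' x * ρ x ≤ Q' x := by
  obtain ⟨ρ', hρ'm, hρρ'⟩ := hρ.integrable_limit.aemeasurable
  set b : ℕ → α → ℝ := fun k x => min (max (ρ' x) 0) k
  have hb : ∀ k, ∀ᵐ x ∂μ, 0 ≤ Q' x - P' x * b k x - ρ x * P (b k x) + P (b k x) * b k x :=
    fun k => ae_minty_nonneg hP hPm hpos hρ hP' hQ'
      ((hρ'm.max measurable_const).min measurable_const)
      fun x => ⟨le_min (le_max_right _ _) k.cast_nonneg, min_le_right _ _⟩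
  filter_upwards [ae_all_iff.2 hb, hρ.ae_nonneg hpos, hρρ'] with x hx (hx0 : 0 ≤ ρ x) hxρ
  have hbx : b ⌈ρ x⌉₊ x = ρ x := by
    simp only [b]
    rw [← hxρ, max_eq_left hx0, min_eq_left (Nat.le_ceil _)]
  have := hx ⌈ρ x⌉₊
  rw [hbx] at this
  linarith

end TendstoWeakly

end

/-- Convexity inequality for weak limits of the pressure: if ρₙ ≥ 0 converge weakly in L¹
to ρ, ρₙ^γ + δρₙ^β converge weakly to P̄, and ρₙ^{γ+1} + δρₙ^{β+1} converge weakly to Q̄,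
then P̄ρ − Q̄ ≤ 0 a.e. -/
theorem stmt_12 {α : Type*} [MeasurableSpace α] (μ : Measure α) [IsFiniteMeasure μ]
    (γ β δ : ℝ) (hγ : 1 < γ) (hβ : 1 < β) (hδ : 0 ≤ δ)
    (ρn : ℕ → α → ℝ) (ρ Pbar Qbar : α → ℝ)
    (hpos : ∀ n x, 0 ≤ ρn n x)
    (hint : ∀ n, Integrable (ρn n) μ ∧
      Integrable (fun x => ρn n x ^ γ + δ * ρn n x ^ β) μ ∧
      Integrable (fun x => ρn n x ^ (γ + 1) + δ * ρn n x ^ (β + 1)) μ)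
    (hlim : Integrable ρ μ ∧ Integrable Pbar μ ∧ Integrable Qbar μ)
    (hw1 : ∀ φ : α → ℝ, Measurable φ → (∃ C, ∀ x, |φ x| ≤ C) →
      Tendsto (fun n => ∫ x, ρn n x * φ x ∂μ) atTop (𝓝 (∫ x, ρ x * φ x ∂μ)))
    (hw2 : ∀ φ : α → ℝ, Measurable φ → (∃ C, ∀ x, |φ x| ≤ C) →
      Tendsto (fun n => ∫ x, (ρn n x ^ γ + δ * ρn n x ^ β) * φ x ∂μ) atTop
        (𝓝 (∫ x, Pbar x * φ x ∂μ)))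
    (hw3 : ∀ φ : α → ℝ, Measurable φ → (∃ C, ∀ x, |φ x| ≤ C) →
      Tendsto (fun n => ∫ x, (ρn n x ^ (γ + 1) + δ * ρn n x ^ (β + 1)) * φ x ∂μ) atTop
        (𝓝 (∫ x, Qbar x * φ x ∂μ))) :
    ∀ᵐ x ∂μ, Pbar x * ρ x - Qbar x ≤ 0 := by
  set P : ℝ → ℝ := fun z => z ^ γ + δ * z ^ β
  have hP : MonotoneOn P (Ici 0) := fun a ha b _ hab =>
    add_le_add (Real.rpow_le_rpow ha hab (by linarith))
      (mul_le_mul_of_nonneg_left (Real.rpow_le_rpow ha hab (by linarith)) hδ)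
  have hPm : Measurable P := by fun_prop
  have hQ : (fun n x => ρn n x ^ (γ + 1) + δ * ρn n x ^ (β + 1))
      = fun n x => P (ρn n x) * ρn n x := by
    funext n x
    rw [Real.rpow_add' (hpos n x) (by linarith), Real.rpow_add' (hpos n x) (by linarith),
      Real.rpow_one]
    simp only [P]
    ring
  have hQ' : TendstoWeakly μ (fun n x => P (ρn n x) * ρn n x) Qbar :=
    hQ ▸ ⟨fun n => (hint n).2.2, hlim.2.2, hw3⟩
  filter_upwards [TendstoWeakly.ae_mul_le hP hPm (fun n => ae_of_all _ (hpos n))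
    ⟨fun n => (hint n).1, hlim.1, hw1⟩ ⟨fun n => (hint n).2.1, hlim.2.1, hw2⟩ hQ'] with x hx
  linarith
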